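/- arXiv:2303.00434 — 2 statements merged into one kernel-verified Lean document; each statement's English description precedes it below -/
import Mathlib

section
/- For every ζ ∈ (1/√3, 1) the saddle point k₄(ζ) = (1/4)(ζ + √(8+ζ²) − i√2·√(4−ζ²−ζ√(8+ζ²))) satisfies Re k₄ > 0, Im k₄ < 0, and Re k₄ > √3·(−Im k₄); that is, arg k₄ ∈ (−π/6, 0). -/
open Complex

noncomputable def k₄ (ζ : ℝ) : ℂ :=
  (1 / 4 : ℂ) * ((ζ : ℂ) + (Real.sqrt (8 + ζ ^ 2) : ℂ) -
    Complex.I * (Real.sqrt 2 : ℂ) *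
      (Real.sqrt (4 - ζ ^ 2 - ζ * Real.sqrt (8 + ζ ^ 2)) : ℂ))

theorem k4_argument_range (ζ : ℝ) (hζ : ζ ∈ Set.Ioo (1 / Real.sqrt 3) 1) :
    0 < (k₄ ζ).re ∧ (k₄ ζ).im < 0 ∧ Real.sqrt 3 * (-(k₄ ζ).im) < (k₄ ζ).re := by
  obtain ⟨h1, h2⟩ := hζ
  have h3 : (0:ℝ) < Real.sqrt 3 := by positivity
  have hζ0 : 0 < ζ := lt_trans (by positivity) h1
  have hζ2 : 1/3 < ζ ^ 2 := by
    have := (div_lt_iff₀ h3).mp h1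
    nlinarith [Real.sq_sqrt (by norm_num : (3:ℝ) ≥ 0), Real.sqrt_nonneg 3]
  set s := Real.sqrt (8 + ζ ^ 2) with hs
  have hs0 : 0 < s := Real.sqrt_pos.mpr (by nlinarith)
  have hs2 : s ^ 2 = 8 + ζ ^ 2 := Real.sq_sqrt (by nlinarith)
  have hlt : ζ * s < 4 - ζ ^ 2 := by nlinarith [mul_pos hζ0 hs0]
  have hgt : 2 - ζ ^ 2 < ζ * s := by nlinarith [mul_pos hζ0 hs0]
  set t := Real.sqrt (4 - ζ ^ 2 - ζ * s) with htd
  have ht0 : 0 < t := Real.sqrt_pos.mpr (by linarith)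
  have ht2 : t ^ 2 = 4 - ζ ^ 2 - ζ * s := Real.sq_sqrt (by linarith)
  have hre : (k₄ ζ).re = (ζ + s) / 4 := by
    simp [k₄, Complex.ext_iff]; ring
  have him : (k₄ ζ).im = -(Real.sqrt 2 * t) / 4 := by
    simp [k₄, Complex.ext_iff]; ring
  have h2t : (0:ℝ) < Real.sqrt 2 := by positivity
  have h22 : (Real.sqrt 2) ^ 2 = 2 := Real.sq_sqrt (by norm_num)
  have h32 : (Real.sqrt 3) ^ 2 = 3 := Real.sq_sqrt (by norm_num)
  refine ⟨by rw [hre]; positivity, by rw [him]; nlinarith [mul_pos h2t ht0], ?_⟩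
  rw [hre, him]
  have key : Real.sqrt 3 * (Real.sqrt 2 * t) < ζ + s := by
    have hb : 0 < ζ + s := by positivity
    have ha : 0 ≤ Real.sqrt 3 * (Real.sqrt 2 * t) := by positivity
    nlinarith [mul_pos (mul_pos h3 h2t) ht0, sq_nonneg (Real.sqrt 3 * (Real.sqrt 2 * t) - (ζ + s)), sq_nonneg (Real.sqrt 3 * Real.sqrt 2)]
  linarith
end

section
/- Let q₁, q₃ ∈ ℂ satisfy 1 + |q₁|² − |q₃|² > 0, and set ν₁ = −(1/2π)ln(1+|q₁|²), ν₃ = −(1/2π)ln(1+|q₁|²−|q₃|²), ν̂ = ν₃ − ν₁. Suppose ν̂ ≠ 0. Define β₁₂ = e^{3πi/4} e^{3πν̂/2} e^{2πν₁} √(2π) q₃ / ((e^{2πν̂}−1)Γ(−iν̂)) and β₂₁ = e^{−3πi/4} e^{3πν̂/2} √(2π) conj(q₃) / ((e^{2πν̂}−1)Γ(iν̂)). Then β₁₂·β₂₁ = ν̂. -/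
/-!
The two phases cancel, and Euler's reflection formula gives `Γ(iν̂) Γ(-iν̂) = π / (ν̂ sinh πν̂)`,
so `β₁₂ β₂₁` is real. Since `|q₃|² e^{2πν₁} = 1 - e^{-2πν̂}`, what remains is the identity
`e^{3x} (1 - e^{-2x}) · 2 sinh x = (e^{2x} - 1)²` at `x = πν̂`.
-/

open Complex

open scoped Real

theorem Complex.Gamma_mul_Gamma_neg (z : ℂ) :
    Gamma z * Gamma (-z) = -π / (z * sin (π * z)) := by
  rcases eq_or_ne z 0 with rfl | hz
  · simp
  have hrefl := Gamma_mul_Gamma_one_sub z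
  rw [sub_eq_neg_add, Gamma_add_one _ (neg_ne_zero.mpr hz)] at hrefl
  calc Gamma z * Gamma (-z) = Gamma z * (-z * Gamma (-z)) / -z := by field_simp
    _ = -π / (z * sin (π * z)) := by rw [hrefl]; ring

theorem Complex.Gamma_I_mul_mul_Gamma_neg_I_mul (x : ℝ) :
    Gamma (I * x) * Gamma (-(I * x)) = (π / (x * Real.sinh (π * x)) : ℝ) := by
  rw [Gamma_mul_Gamma_neg, show (π : ℂ) * (I * x) = (π * x : ℝ) * I by push_cast; ring, sin_mul_I,
    ← ofReal_sinh]
  push_cast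
  field_simp
  ring_nf
  simp

theorem Real.exp_sq_mul_one_sub_exp_neg_mul_sinh (x : ℝ) :
    exp (3 * x / 2) ^ 2 * (1 - exp (-(2 * x))) * (2 * sinh x) = (exp (2 * x) - 1) ^ 2 := by
  have h3 : exp (3 * x / 2) ^ 2 = exp x ^ 3 := by rw [← exp_nat_mul, ← exp_nat_mul]; ring_nf
  have h2 : exp (2 * x) = exp x ^ 2 := by rw [← exp_nat_mul]; ring_nf
  rw [h3, h2, exp_neg, h2, sinh_eq, exp_neg]
  field_simp

theorem Real.exp_two_pi_mul_neg_log_div {c : ℝ} (hc : 0 < c) :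
    exp (2 * π * (-(1 / (2 * π)) * log c)) = c⁻¹ := by
  rw [show 2 * π * (-(1 / (2 * π)) * log c) = -log c by field_simp, exp_neg, exp_log hc]

theorem norm_sq_mul_exp_eq_one_sub_exp {q₁ q₃ : ℂ} {ν₁ ν₃ : ℝ}
    (hq : 0 < 1 + ‖q₁‖ ^ 2 - ‖q₃‖ ^ 2)
    (hν₁ : ν₁ = -(1 / (2 * π)) * Real.log (1 + ‖q₁‖ ^ 2))
    (hν₃ : ν₃ = -(1 / (2 * π)) * Real.log (1 + ‖q₁‖ ^ 2 - ‖q₃‖ ^ 2)) :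
    ‖q₃‖ ^ 2 * Real.exp (2 * π * ν₁) = 1 - Real.exp (-(2 * π * (ν₃ - ν₁))) := by
  have ha : Real.exp (2 * π * ν₁) = (1 + ‖q₁‖ ^ 2)⁻¹ :=
    hν₁ ▸ Real.exp_two_pi_mul_neg_log_div (by positivity)
  have hb : Real.exp (2 * π * ν₃) = (1 + ‖q₁‖ ^ 2 - ‖q₃‖ ^ 2)⁻¹ :=
    hν₃ ▸ Real.exp_two_pi_mul_neg_log_div hq
  rw [show -(2 * π * (ν₃ - ν₁)) = 2 * π * ν₁ - 2 * π * ν₃ by ring, Real.exp_sub, ha, hb]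
  field_simp
  ring

theorem beta_product (q₁ q₃ : ℂ) (ν₁ ν₃ νhat : ℝ) (β₁₂ β₂₁ : ℂ)
    (hq : 0 < 1 + ‖q₁‖ ^ 2 - ‖q₃‖ ^ 2)
    (hν₁ : ν₁ = -(1 / (2 * Real.pi)) * Real.log (1 + ‖q₁‖ ^ 2))
    (hν₃ : ν₃ = -(1 / (2 * Real.pi)) *
      Real.log (1 + ‖q₁‖ ^ 2 - ‖q₃‖ ^ 2))
    (hνhat : νhat = ν₃ - ν₁) (hν : νhat ≠ 0)
    (hβ₁₂ : β₁₂ = Complex.exp (3 * Real.pi * Complex.I / 4) *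
      (Real.exp (3 * Real.pi * νhat / 2) : ℂ) * (Real.exp (2 * Real.pi * ν₁) : ℂ) *
      (Real.sqrt (2 * Real.pi) : ℂ) * q₃ /
      (((Real.exp (2 * Real.pi * νhat) : ℂ) - 1) * Complex.Gamma (-(Complex.I * νhat))))
    (hβ₂₁ : β₂₁ = Complex.exp (-(3 * Real.pi * Complex.I) / 4) *
      (Real.exp (3 * Real.pi * νhat / 2) : ℂ) * (Real.sqrt (2 * Real.pi) : ℂ) *
      (starRingEnd ℂ) q₃ /
      (((Real.exp (2 * Real.pi * νhat) : ℂ) - 1) * Complex.Gamma (Complex.I * νhat))) :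
    β₁₂ * β₂₁ = (νhat : ℂ) := by
  have hnorm : ‖q₃‖ ^ 2 * Real.exp (2 * π * ν₁) = 1 - Real.exp (-(2 * π * νhat)) :=
    hνhat ▸ norm_sq_mul_exp_eq_one_sub_exp hq hν₁ hν₃
  have hphase : exp (3 * π * I / 4) * exp (-(3 * π * I) / 4) = 1 := by
    rw [← exp_add, ← exp_zero]; ring_nf
  have hsqrt : (√(2 * π) : ℂ) * √(2 * π) = (2 * π : ℝ) := by
    exact_mod_cast Real.mul_self_sqrt (by positivity)
  have hexp : 1 - Real.exp (-(2 * π * νhat)) ≠ 0 := by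
    simpa [sub_eq_zero, eq_comm (a := (1 : ℝ)), Real.pi_ne_zero] using hν
  have hsinh : Real.sinh (π * νhat) ≠ 0 := by simpa [Real.pi_ne_zero] using hν
  have hsq := Real.exp_sq_mul_one_sub_exp_neg_mul_sinh (π * νhat)
  simp only [← mul_assoc] at hsq
  calc β₁₂ * β₂₁ = exp (3 * π * I / 4) * exp (-(3 * π * I) / 4) * (√(2 * π) * √(2 * π)) *
        Real.exp (3 * π * νhat / 2) ^ 2 * Real.exp (2 * π * ν₁) * (q₃ * (starRingEnd ℂ) q₃) /
        ((Real.exp (2 * π * νhat) - 1) ^ 2 * (Gamma (I * νhat) * Gamma (-(I * νhat)))) := by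
        rw [hβ₁₂, hβ₂₁, div_mul_div_comm]; ring
    _ = (Real.exp (3 * π * νhat / 2) ^ 2 * (‖q₃‖ ^ 2 * Real.exp (2 * π * ν₁)) * (2 * π) /
        ((Real.exp (2 * π * νhat) - 1) ^ 2 * (π / (νhat * Real.sinh (π * νhat)))) : ℝ) := by
        rw [hphase, hsqrt, mul_conj, Gamma_I_mul_mul_Gamma_neg_I_mul, normSq_eq_norm_sq]
        push_cast; ring
    _ = νhat := by
        rw [hnorm]
        congr 1
        rw [← hsq]
        -- an opaque atom, so that `field_simp` cannot renormalise the exponent and miss `hexp`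
        set u := 1 - Real.exp (-(2 * π * νhat))
        field_simp
end
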